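/- Let A := ℚ[ε] be the ring of dual numbers over ℚ (so ε² = 0). In A[[X]], let exp X := ∑_{k≥0} X^k/k!, cosh X := (exp X + exp(−X))/2, sinh X := (exp X − exp(−X))/2, and set f := 1 + ε·(exp X − 1) and g := X + 2ε·X·(cosh X − 1). Then f(−g(X))² = g′(X) · (1 − 2ε·(1 + X)·sinh X), where f(−g(X)) denotes the substitution of the power series −g(X) (which has zero constant term) into f, and g′ is the formal derivative of g. -/

import Mathlib

/-!
Since `ε² = 0`, the `ε`-part of `f` only sees the first-order term `-X` of `-g`, so
`f(-g) = 1 + ε(e^{-X} - 1)` and `f(-g)² = 1 + 2ε(e^{-X} - 1)`. On the other side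
`g' = 1 + 2ε(cosh X - 1 + X sinh X)`, and multiplying by `1 - 2ε(1 + X) sinh X` leaves
`1 + 2ε(cosh X - sinh X - 1)`, which is the same series because `cosh X - sinh X = e^{-X}`.
-/

/-- Formal composition `f(g(X))` of power series; it agrees with the usual substitution
whenever `g` has zero constant coefficient. -/
noncomputable def PowerSeries.comp' {A : Type*} [CommRing A] (f g : PowerSeries A) :
    PowerSeries A :=
  PowerSeries.mk fun n => ∑ k ∈ Finset.range (n + 1),
    PowerSeries.coeff (R := A) k f * PowerSeries.coeff (R := A) n (g ^ k)

theorem mul_mul_add_pow_of_mul_self_eq_zero {R : Type*} [CommRing R] {c : R} (hc : c * c = 0)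
    (x y : R) (k : ℕ) : c * (x + c * y) ^ k = c * x ^ k := by
  induction k with
  | zero => simp
  | succ k ih =>
    rw [pow_succ, pow_succ]
    linear_combination (x + c * y) * ih + x ^ k * y * hc

namespace PowerSeries

variable {R : Type*} [CommRing R]

theorem comp'_add (f₁ f₂ g : R⟦X⟧) : comp' (f₁ + f₂) g = comp' f₁ g + comp' f₂ g := by
  ext n
  simp [comp', add_mul, Finset.sum_add_distrib]

theorem comp'_C_mul (a : R) (f g : R⟦X⟧) : comp' (C a * f) g = C a * comp' f g := by
  ext n
  simp [comp', coeff_C_mul, Finset.mul_sum, mul_assoc]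

theorem comp'_one (g : R⟦X⟧) : comp' 1 g = 1 := by
  ext n
  rw [comp', coeff_mk, Finset.sum_eq_single_of_mem 0 (by simp)]
  · simp
  · intro k _ hk
    simp [coeff_one, hk]

theorem comp'_C_mul_X (a : R) (f : R⟦X⟧) : comp' f (C a * X) = rescale a f := by
  ext n
  rw [comp', coeff_mk, coeff_rescale, Finset.sum_eq_single_of_mem n (by simp)]
  · rw [mul_pow, ← map_pow, coeff_C_mul_X_pow, if_pos rfl, mul_comm]
  · intro k _ hk
    rw [mul_pow, ← map_pow, coeff_C_mul_X_pow, if_neg (Ne.symm hk), mul_zero]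

theorem comp'_neg_X (f : R⟦X⟧) : comp' f (-X) = rescale (-1) f := by
  simpa using comp'_C_mul_X (-1) f

theorem C_mul_comp'_add_C_mul {a : R} (ha : a * a = 0) (f g h : R⟦X⟧) :
    C a * comp' f (g + C a * h) = C a * comp' f g := by
  have hpow (k : ℕ) : C a * (g + C a * h) ^ k = C a * g ^ k :=
    mul_mul_add_pow_of_mul_self_eq_zero (by rw [← map_mul, ha, map_zero]) g h k
  ext n
  simp only [coeff_C_mul, comp', coeff_mk, Finset.mul_sum]
  refine Finset.sum_congr rfl fun k _ => ?_
  rw [mul_left_comm, ← coeff_C_mul, hpow, coeff_C_mul, mul_left_comm]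

theorem derivative_rescale (a : R) (f : R⟦X⟧) :
    d⁄dX R (rescale a f) = C a * rescale a (d⁄dX R f) := by
  ext n
  rw [coeff_derivative, coeff_rescale, coeff_C_mul, coeff_rescale, coeff_derivative, pow_succ]
  ring

theorem derivative_rescale_exp {A : Type*} [CommRing A] [Algebra ℚ A] (a : A) :
    d⁄dX A (rescale a (exp A)) = C a * rescale a (exp A) := by
  rw [derivative_rescale, derivative_exp]

end PowerSeries

open PowerSeries in
/-- over the dual numbers `A = ℚ[ε]`, with `f = 1 + ε(exp X − 1)` and
`g = X + 2εX(cosh X − 1)`, one has `f(−g(X))² = g′(X)·(1 − 2ε(1 + X) sinh X)`.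
Here `exp X = ∑ X^k/k!`, `cosh X = (exp X + exp(−X))/2` and
`sinh X = (exp X − exp(−X))/2`. -/
theorem statement8 :
    let A := DualNumber ℚ
    let E : PowerSeries A := PowerSeries.exp A
    let cosh : PowerSeries A := (1 / 2 : ℚ) • (E + PowerSeries.rescale (-1) E)
    let sinh : PowerSeries A := (1 / 2 : ℚ) • (E - PowerSeries.rescale (-1) E)
    let f : PowerSeries A := 1 + PowerSeries.C (R := A) DualNumber.eps * (E - 1)
    let g : PowerSeries A :=
      PowerSeries.X + 2 * PowerSeries.C (R := A) DualNumber.eps * PowerSeries.X * (cosh - 1)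
    PowerSeries.comp' f (-g) ^ 2
      = PowerSeries.derivativeFun g *
          (1 - 2 * PowerSeries.C (R := A) DualNumber.eps * (1 + PowerSeries.X) * sinh) := by
  intro A E cosh sinh f g
  set ε : A⟦X⟧ := C DualNumber.eps
  have hε : ε * ε = 0 := by rw [← map_mul, DualNumber.eps_mul_eps, map_zero]
  have hf : comp' f (-g) = 1 + ε * (rescale (-1) E - 1) := by
    have hg : -g = -X + ε * (-(2 * X * (cosh - 1))) := by
      simp only [g]
      ring
    rw [comp'_add, comp'_one, comp'_C_mul, hg, C_mul_comp'_add_C_mul DualNumber.eps_mul_eps,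
      comp'_neg_X, map_sub, map_one]
  have hcosh : d⁄dX A cosh = sinh := by
    simp only [cosh, sinh, E, Derivation.map_smul_of_tower, map_add, derivative_exp,
      derivative_rescale_exp]
    rw [map_neg, map_one, neg_one_mul, sub_eq_add_neg]
  have hg' : d⁄dX A g = 1 + ε * (2 * X * sinh + 2 * (cosh - 1)) := by
    have h2 : d⁄dX A 2 = 0 := by simpa using (d⁄dX A).map_natCast 2
    simp only [g, Derivation.leibniz, map_add, map_sub, derivative_X, derivative_C, derivative_one,
      h2, hcosh, smul_eq_mul, ε]
    ring
  have hcs : cosh - sinh = rescale (-1) E := by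
    simp only [cosh, sinh]
    module
  change comp' f (-g) ^ 2 = d⁄dX A g * _
  rw [hf, hg']
  linear_combination (-2 * ε) * hcs
    + ((rescale (-1) E - 1) ^ 2 + 2 * (X * sinh + cosh - 1) * 2 * (1 + X) * sinh) * hε
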